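/- Let p be a prime with p ≥ n and let q = p^d. Then every elementary abelian p-subgroup E of GL_n(F_q) is contained in an F_q-linear elementary abelian p-subgroup of GL_n(F_q). -/

import Mathlib

open Matrix

/-- The truncated exponential `exp(X) = ∑_{i=0}^{p-1} X^i / i!`. -/
noncomputable def texp {k : Type*} [Field k] {n : ℕ} (p : ℕ)
    (X : Matrix (Fin n) (Fin n) k) : Matrix (Fin n) (Fin n) k :=
  ∑ i ∈ Finset.range p, ((Nat.factorial i : k)⁻¹) • X ^ i

/-- The truncated logarithm `log(u) = ∑_{i=1}^{p-1} (-1)^{i+1} (u-1)^i / i`. -/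
noncomputable def tlog {k : Type*} [Field k] {n : ℕ} (p : ℕ)
    (u : Matrix (Fin n) (Fin n) k) : Matrix (Fin n) (Fin n) k :=
  ∑ i ∈ Finset.Icc 1 (p - 1), ((-1 : k) ^ (i + 1) * (i : k)⁻¹) • (u - 1) ^ i

/-- For a unipotent matrix `g` and a scalar `λ`, the generalized power
`g^λ := exp(λ · log g)`. -/
noncomputable def upow {k : Type*} [Field k] {n : ℕ} (p : ℕ)
    (g : Matrix (Fin n) (Fin n) k) (lam : k) : Matrix (Fin n) (Fin n) k :=
  texp p (lam • tlog p g)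

/-- An elementary abelian `p`-subgroup: an abelian subgroup of exponent dividing `p`. -/
def IsElemAbelian (p : ℕ) {G : Type*} [Group G] (E : Subgroup G) : Prop :=
  (∀ g ∈ E, ∀ h ∈ E, g * h = h * g) ∧ ∀ g ∈ E, g ^ p = 1

/-- A subgroup `E ⊆ GL_n(k)` (of unipotent elements) is `k`-linear if `g^λ ∈ E`
for every `g ∈ E` and every `λ ∈ k`. -/
def IsLinearSubgroup {k : Type*} [Field k] {n : ℕ} (p : ℕ)
    (E : Subgroup (GL (Fin n) k)) : Prop :=
  ∀ g ∈ E, ∀ lam : k, ∃ g' ∈ E,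
    (g' : Matrix (Fin n) (Fin n) k) = upow p (g : Matrix (Fin n) (Fin n) k) lam

/-!
Let `A` be the `𝔽_q`-subalgebra of matrices generated by `E`; it is commutative because `E` is.
The units `u ∈ A` with `u - 1` nilpotent form a subgroup `E'` containing `E`, since
`(g - 1)^p = g^p - 1 = 0` for `g ∈ E`. It is elementary abelian: `A` is commutative, and a
nilpotent `n × n` matrix `N` has `N^n = 0`, so `u^p - 1 = (u - 1)^p = 0` as `n ≤ p`. It is
`𝔽_q`-linear because `g^λ - 1 = exp(λ log g) - 1` is a polynomial without constant term in
`g - 1`, hence a nilpotent element of `A`.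
-/

section UnipotentUnits

variable {R S : Type*} [Ring R] [SetLike S R] [SubringClass S R] (A : S)

theorem inv_mem_of_isNilpotent_sub_one {u : Rˣ} (hu : (u : R) ∈ A)
    (hnil : IsNilpotent ((u : R) - 1)) : ((u⁻¹ : Rˣ) : R) ∈ A := by
  obtain ⟨m, hm⟩ := hnil.neg
  rw [neg_sub] at hm
  have hinv : (u : R) * ∑ i ∈ Finset.range m, (1 - (u : R)) ^ i = 1 := by
    simpa [hm] using mul_neg_geom_sum (1 - (u : R)) m
  rw [Units.inv_eq_of_mul_eq_one_right hinv]
  exact sum_mem fun i _ => pow_mem (sub_mem (one_mem A) hu) i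

variable [IsMulCommutative A]

theorem commute_of_mem_of_isMulCommutative {a b : R} (ha : a ∈ A) (hb : b ∈ A) : Commute a b :=
  setLike_mul_comm ha hb

def unipotentUnits : Subgroup Rˣ where
  carrier := {u | (u : R) ∈ A ∧ IsNilpotent ((u : R) - 1)}
  one_mem' := ⟨one_mem A, by simp⟩
  mul_mem' := by
    rintro u v ⟨hu, hu1⟩ ⟨hv, hv1⟩
    refine ⟨by simpa using mul_mem hu hv, ?_⟩
    have hsplit : ((u * v : Rˣ) : R) - 1 = u * (v - 1) + (u - 1) := by
      rw [Units.val_mul]; noncomm_ring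
    rw [hsplit]
    have hu1A : (u : R) - 1 ∈ A := sub_mem hu (one_mem A)
    have hv1A : (v : R) - 1 ∈ A := sub_mem hv (one_mem A)
    exact (commute_of_mem_of_isMulCommutative A (mul_mem hu hv1A) hu1A).isNilpotent_add
      ((commute_of_mem_of_isMulCommutative A hu hv1A).isNilpotent_mul_left hv1) hu1
  inv_mem' := by
    rintro u ⟨hu, hu1⟩
    have hinv := inv_mem_of_isNilpotent_sub_one A hu hu1
    refine ⟨hinv, ?_⟩
    have hsplit : ((u⁻¹ : Rˣ) : R) - 1 = -(((u⁻¹ : Rˣ) : R) * (u - 1)) := by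
      rw [mul_sub, Units.inv_mul, mul_one, neg_sub]
    rw [hsplit]
    have hu1A : (u : R) - 1 ∈ A := sub_mem hu (one_mem A)
    exact ((commute_of_mem_of_isMulCommutative A hinv hu1A).isNilpotent_mul_left hu1).neg

@[simp]
theorem mem_unipotentUnits {u : Rˣ} :
    u ∈ unipotentUnits A ↔ (u : R) ∈ A ∧ IsNilpotent ((u : R) - 1) :=
  Iff.rfl

end UnipotentUnits

theorem sub_one_pow_char {K R : Type*} [Field K] [Ring R] [Algebra K R] (p : ℕ) [Fact p.Prime]
    [CharP K p] (x : R) : (x - 1) ^ p = x ^ p - 1 := by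
  nontriviality R
  have : CharP R p := charP_of_injective_algebraMap (algebraMap K R).injective p
  rw [sub_pow_char_of_commute _ (Commute.one_right x), one_pow]

theorem Matrix.pow_card_eq_zero_of_isNilpotent {ι K : Type*} [Fintype ι] [DecidableEq ι]
    [CommRing K] [IsDomain K] {M : Matrix ι ι K} (hM : IsNilpotent M) :
    M ^ Fintype.card ι = 0 := by
  have hchar := sub_eq_zero.mp (isNilpotent_charpoly_sub_pow_of_isNilpotent hM).eq_zero
  simpa [hchar] using M.aeval_self_charpoly

theorem Matrix.pow_char_eq_one_of_isNilpotent_sub_one {ι K : Type*} [Fintype ι] [DecidableEq ι]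
    [Field K] {p : ℕ} [Fact p.Prime] [CharP K p] (hp : Fintype.card ι ≤ p)
    {u : Matrix ι ι K} (hu : IsNilpotent (u - 1)) : u ^ p = 1 := by
  rw [← sub_eq_zero, ← sub_one_pow_char (K := K) p]
  exact pow_eq_zero_of_le hp (pow_card_eq_zero_of_isNilpotent hu)

theorem isNilpotent_sum_smul_pow {k R : Type*} [CommSemiring k] [Ring R] [Algebra k R] {x : R}
    (hx : IsNilpotent x) {s : Finset ℕ} (hs : 0 ∉ s) (c : ℕ → k) :
    IsNilpotent (∑ i ∈ s, c i • x ^ i) :=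
  Commute.isNilpotent_sum
    (fun _ hi => (hx.pow_of_pos (ne_of_mem_of_not_mem hi hs)).smul _)
    (fun i j _ _ => ((Commute.pow_pow_self x i j).smul_left _).smul_right _)

section MatrixUnipotentUnits

variable {k : Type*} [Field k] {n : ℕ} (p : ℕ)

theorem isElemAbelian_unipotentUnits [Fact p.Prime] [CharP k p] (hnp : n ≤ p)
    (A : Subalgebra k (Matrix (Fin n) (Fin n) k)) [IsMulCommutative A] :
    IsElemAbelian p (unipotentUnits A) :=
  ⟨fun _ hg _ hh => Units.ext (setLike_mul_comm hg.1 hh.1),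
    fun _ hg => Units.ext (by
      simpa using Matrix.pow_char_eq_one_of_isNilpotent_sub_one (by simpa using hnp) hg.2)⟩

theorem texp_mem {A : Subalgebra k (Matrix (Fin n) (Fin n) k)} {X : Matrix (Fin n) (Fin n) k}
    (hX : X ∈ A) : texp p X ∈ A :=
  A.sum_mem fun i _ => A.smul_mem (A.pow_mem hX i) _

theorem tlog_mem {A : Subalgebra k (Matrix (Fin n) (Fin n) k)} {u : Matrix (Fin n) (Fin n) k}
    (hu : u ∈ A) : tlog p u ∈ A :=
  A.sum_mem fun i _ => A.smul_mem (A.pow_mem (A.sub_mem hu A.one_mem) i) _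

theorem isNilpotent_tlog {u : Matrix (Fin n) (Fin n) k} (hu : IsNilpotent (u - 1)) :
    IsNilpotent (tlog p u) :=
  isNilpotent_sum_smul_pow hu (by simp) _

theorem isNilpotent_texp_sub_one (hp : p ≠ 0) {X : Matrix (Fin n) (Fin n) k}
    (hX : IsNilpotent X) : IsNilpotent (texp p X - 1) := by
  rw [texp, Finset.range_eq_Ico, Finset.sum_eq_sum_Ico_succ_bot (Nat.pos_of_ne_zero hp)]
  simpa using isNilpotent_sum_smul_pow hX (s := Finset.Ico 1 p) (by simp) _

theorem isLinearSubgroup_unipotentUnits (hp : p ≠ 0)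
    (A : Subalgebra k (Matrix (Fin n) (Fin n) k)) [IsMulCommutative A] :
    IsLinearSubgroup (k := k) p (unipotentUnits A) := by
  intro g hg lam
  obtain ⟨hgA, hg⟩ := (mem_unipotentUnits A).mp hg
  set M := upow p (g : Matrix (Fin n) (Fin n) k) lam
  have hnil : IsNilpotent (M - 1) :=
    isNilpotent_texp_sub_one p hp ((isNilpotent_tlog p hg).smul lam)
  have hmem : M ∈ A := texp_mem p (A.smul_mem (tlog_mem p hgA) lam)
  obtain ⟨v, hv⟩ : IsUnit M := by simpa using hnil.isUnit_add_one
  exact ⟨v, (mem_unipotentUnits A).mpr ⟨hv ▸ hmem, hv ▸ hnil⟩, hv⟩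

end MatrixUnipotentUnits

theorem exists_linear_elementary_abelian_superset_general {p n : ℕ} (hp : p.Prime) (hnp : n ≤ p)
    {k : Type*} [Field k] [CharP k p]
    (E : Subgroup (GL (Fin n) k)) (hE : IsElemAbelian p E) :
    ∃ E' : Subgroup (GL (Fin n) k),
      IsElemAbelian p E' ∧ IsLinearSubgroup p E' ∧ E ≤ E' := by
  have := Fact.mk hp
  let A := Algebra.adjoin k (Units.val '' (E : Set (GL (Fin n) k)))
  have : IsMulCommutative A := Algebra.isMulCommutative_adjoin k <| by
    rintro _ ⟨g, hg, rfl⟩ _ ⟨h, hh, rfl⟩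
    exact congrArg Units.val (hE.1 g hg h hh)
  refine ⟨unipotentUnits A, isElemAbelian_unipotentUnits p hnp A,
    isLinearSubgroup_unipotentUnits p hp.ne_zero A,
    fun g hg => ⟨Algebra.subset_adjoin ⟨g, hg, rfl⟩, p, ?_⟩⟩
  rw [sub_one_pow_char (K := k) p, ← Units.val_pow_eq_pow_val, hE.2 g hg, Units.val_one, sub_self]

/-- Let `p ≥ n` be a prime and `q = p^d`.  Every elementary abelian
`p`-subgroup of `GL_n(𝔽_q)` is contained in an `𝔽_q`-linear elementary abelian
`p`-subgroup of `GL_n(𝔽_q)`. -/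
theorem exists_linear_elementary_abelian_superset {p d n : ℕ} (hp : p.Prime) (hnp : n ≤ p)
    {k : Type*} [Field k] [Fintype k] [CharP k p] (hq : Fintype.card k = p ^ d)
    (E : Subgroup (GL (Fin n) k)) (hE : IsElemAbelian p E) :
    ∃ E' : Subgroup (GL (Fin n) k),
      IsElemAbelian p E' ∧ IsLinearSubgroup p E' ∧ E ≤ E' :=
  exists_linear_elementary_abelian_superset_general hp hnp E hE
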